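/- For integers k ≥ 2 and m, n ≥ 1, tilings of an m×n×k cuboid by k×k×1 bricks are in bijection with tilings of an m×n rectangle by k×1 and k×k tiles, via projection onto the m×n face: each k×1 tile is the projection of a single brick and each k×k tile is the projection of a stack of k bricks. -/

import Mathlib

/-- The cells of an `m × n` rectangle: `(row, column)` with `row < m`, `column < n`. -/
def grid (m n : ℕ) : Finset (ℕ × ℕ) := Finset.range m ×ˢ Finset.range n

/-- A horizontal `k × 1` tile: `k` consecutive cells in one row. -/
def IsHTile (k : ℕ) (t : Finset (ℕ × ℕ)) : Prop :=
  ∃ i j : ℕ, t = (Finset.range k).image fun s => (i, j + s)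

/-- A vertical `k × 1` tile: `k` consecutive cells in one column. -/
def IsVTile (k : ℕ) (t : Finset (ℕ × ℕ)) : Prop :=
  ∃ i j : ℕ, t = (Finset.range k).image fun s => (i + s, j)

/-- A tiling of the `m × n` rectangle by `k × 1` tiles. -/
def IsTiling (m n k : ℕ) (T : Finset (Finset (ℕ × ℕ))) : Prop :=
  (∀ t ∈ T, IsHTile k t ∨ IsVTile k t) ∧
  (T : Set (Finset (ℕ × ℕ))).PairwiseDisjoint id ∧
  T.biUnion id = grid m n

/-- The number of tilings of the `m × n` rectangle by `k × 1` tiles. -/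
noncomputable def numTilings (m n k : ℕ) : ℕ :=
  Nat.card {T : Finset (Finset (ℕ × ℕ)) // IsTiling m n k T}

/-- The tiling `T` has a fault at `x = a`: every tile lies entirely in
columns `< a` or entirely in columns `≥ a`. -/
def HasFaultAt (T : Finset (Finset (ℕ × ℕ))) (a : ℕ) : Prop :=
  ∀ t ∈ T, (∀ c ∈ t, c.2 < a) ∨ (∀ c ∈ t, a ≤ c.2)

/-- A tiling of a rectangle with `n` columns is fault-free. -/
def FaultFree (n : ℕ) (T : Finset (Finset (ℕ × ℕ))) : Prop :=
  ∀ a : ℕ, 0 < a → a < n → ¬ HasFaultAt T a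

/-- The number of fault-free tilings of the `m × n` rectangle by `k × 1` tiles. -/
noncomputable def numFFTilings (m n k : ℕ) : ℕ :=
  Nat.card {T : Finset (Finset (ℕ × ℕ)) // IsTiling m n k T ∧ FaultFree n T}

/-- A `k × k` square tile. -/
def IsSqTile (k : ℕ) (t : Finset (ℕ × ℕ)) : Prop :=
  ∃ i j : ℕ, t = (Finset.range k ×ˢ Finset.range k).image fun p => (i + p.1, j + p.2)

/-- A tiling of the `m × n` rectangle by `k × 1` and `k × k` tiles. -/
def IsTiling' (m n k : ℕ) (T : Finset (Finset (ℕ × ℕ))) : Prop :=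
  (∀ t ∈ T, IsHTile k t ∨ IsVTile k t ∨ IsSqTile k t) ∧
  (T : Set (Finset (ℕ × ℕ))).PairwiseDisjoint id ∧
  T.biUnion id = grid m n

/-- The number of fault-free tilings of the `m × n` rectangle by `k × 1` and `k × k` tiles. -/
noncomputable def numFFTilings' (m n k : ℕ) : ℕ :=
  Nat.card {T : Finset (Finset (ℕ × ℕ)) // IsTiling' m n k T ∧ FaultFree n T}

/-- The cells of an `m × n × k` cuboid. -/
def grid3 (m n k : ℕ) : Finset (ℕ × ℕ × ℕ) :=
  Finset.range m ×ˢ Finset.range n ×ˢ Finset.range k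

/-- A `k × k × 1` brick of extent `1` in the first coordinate. -/
def IsBrick1 (k : ℕ) (t : Finset (ℕ × ℕ × ℕ)) : Prop :=
  ∃ i j c : ℕ, t = (Finset.range k ×ˢ Finset.range k).image fun p => (i, j + p.1, c + p.2)

/-- A `k × k × 1` brick of extent `1` in the second coordinate. -/
def IsBrick2 (k : ℕ) (t : Finset (ℕ × ℕ × ℕ)) : Prop :=
  ∃ i j c : ℕ, t = (Finset.range k ×ˢ Finset.range k).image fun p => (i + p.1, j, c + p.2)

/-- A `k × k × 1` brick of extent `1` in the third coordinate. -/
def IsBrick3 (k : ℕ) (t : Finset (ℕ × ℕ × ℕ)) : Prop :=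
  ∃ i j c : ℕ, t = (Finset.range k ×ˢ Finset.range k).image fun p => (i + p.1, j + p.2, c)

/-- A tiling of the `m × n × k` cuboid by `k × k × 1` bricks. -/
def IsCuboidTiling (m n k : ℕ) (T : Finset (Finset (ℕ × ℕ × ℕ))) : Prop :=
  (∀ t ∈ T, IsBrick1 k t ∨ IsBrick2 k t ∨ IsBrick3 k t) ∧
  (T : Set (Finset (ℕ × ℕ × ℕ))).PairwiseDisjoint id ∧
  T.biUnion id = grid3 m n k

/-- Project a cuboid tiling onto the `m × n` face: each brick is sent to its
shadow in the first two coordinates. -/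
def projTiling (T : Finset (Finset (ℕ × ℕ × ℕ))) : Finset (Finset (ℕ × ℕ)) :=
  T.image fun t => t.image fun c => (c.1, c.2.1)


/-!
In a tiling of the `m × n × k` cuboid, a brick standing in a vertical plane has height `k`, so it is
the upright prism over a `k × 1` tile; a horizontal brick is a `k × k` square at a single level.
At every level the horizontal bricks therefore tile the same region, namely the part of the floor
not covered by upright bricks, and a region has at most one tiling by `k × k` squares: the square
covering the corner `q` of another square has its own corner coordinatewise below `q`, so
induction on `q.1 + q.2` identifies the two tilings. Hence flat squares come in full stacks of
`k`, and projection is inverted by lifting each `k × 1` tile to an upright brick and each `k × k`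
tile to a stack of `k` flat bricks.
-/

open Finset

namespace CuboidTiling

variable {k c : ℕ} {t : Finset (ℕ × ℕ)} {Z Z' : Finset ℕ} {b : Finset (ℕ × ℕ × ℕ)}

def cylinder (t : Finset (ℕ × ℕ)) (Z : Finset ℕ) : Finset (ℕ × ℕ × ℕ) :=
  (t ×ˢ Z).map (Equiv.prodAssoc ℕ ℕ ℕ).toEmbedding

@[simp]
lemma mem_cylinder {p : ℕ × ℕ × ℕ} : p ∈ cylinder t Z ↔ (p.1, p.2.1) ∈ t ∧ p.2.2 ∈ Z := by
  simp [cylinder]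

lemma disjoint_cylinder_iff {t' : Finset (ℕ × ℕ)} :
    Disjoint (cylinder t Z) (cylinder t' Z') ↔ Disjoint t t' ∨ Disjoint Z Z' := by
  rw [cylinder, cylinder, disjoint_map, disjoint_product]

lemma grid3_eq_cylinder (m n k : ℕ) : grid3 m n k = cylinder (grid m n) (range k) := by
  ext ⟨x, y, z⟩
  simp [grid3, grid, and_assoc]

def footprint (b : Finset (ℕ × ℕ × ℕ)) : Finset (ℕ × ℕ) := b.image fun p => (p.1, p.2.1)

lemma mem_footprint {q : ℕ × ℕ} : q ∈ footprint b ↔ ∃ z, (q.1, q.2, z) ∈ b := by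
  simp only [footprint, mem_image]
  constructor
  · rintro ⟨⟨x, y, z⟩, h, rfl⟩; exact ⟨z, h⟩
  · rintro ⟨z, h⟩; exact ⟨_, h, rfl⟩

lemma footprint_cylinder (t : Finset (ℕ × ℕ)) (hZ : Z.Nonempty) : footprint (cylinder t Z) = t := by
  ext q
  obtain ⟨z, hz⟩ := hZ
  simp only [mem_footprint, mem_cylinder]
  exact ⟨fun ⟨_, h, _⟩ => h, fun h => ⟨z, h, hz⟩⟩

lemma mem_projTiling {T : Finset (Finset (ℕ × ℕ × ℕ))} :
    t ∈ projTiling T ↔ ∃ b ∈ T, footprint b = t :=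
  mem_image

lemma footprint_biUnion (T : Finset (Finset (ℕ × ℕ × ℕ))) :
    footprint (T.biUnion id) = (projTiling T).biUnion id := by
  rw [footprint, biUnion_image, projTiling, image_biUnion]
  rfl

def square (k : ℕ) (q : ℕ × ℕ) : Finset (ℕ × ℕ) := Ico q.1 (q.1 + k) ×ˢ Ico q.2 (q.2 + k)

lemma mem_square_self (hk : 0 < k) (q : ℕ × ℕ) : q ∈ square k q := by
  simp [square, hk]

lemma le_of_mem_square {p q : ℕ × ℕ} (h : p ∈ square k q) : q.1 ≤ p.1 ∧ q.2 ≤ p.2 := by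
  simp only [square, mem_product, mem_Ico] at h
  exact ⟨h.1.1, h.2.1⟩

lemma square_injective (hk : 0 < k) : Function.Injective (square k) := by
  intro q q' h
  have h₁ := le_of_mem_square (h ▸ mem_square_self hk q)
  have h₂ := le_of_mem_square (h ▸ mem_square_self hk q' : q' ∈ square k q)
  exact Prod.ext (by omega) (by omega)

lemma card_square (k : ℕ) (q : ℕ × ℕ) : (square k q).card = k * k := by
  simp [square]

lemma isHTile_iff : IsHTile k t ↔ ∃ i j, t = {i} ×ˢ Ico j (j + k) := by
  have (i j : ℕ) : ((range k).image fun s => (i, j + s)) = {i} ×ˢ Ico j (j + k) := by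
    ext ⟨x, y⟩
    simp only [mem_image, mem_range, mem_product, mem_singleton, mem_Ico, Prod.mk.injEq]
    constructor
    · rintro ⟨s, hs, rfl, rfl⟩; omega
    · rintro ⟨rfl, h⟩; exact ⟨y - j, by omega, rfl, by omega⟩
  simp only [IsHTile, this]

lemma isVTile_iff : IsVTile k t ↔ ∃ i j, t = Ico i (i + k) ×ˢ {j} := by
  have (i j : ℕ) : ((range k).image fun s => (i + s, j)) = Ico i (i + k) ×ˢ {j} := by
    ext ⟨x, y⟩
    simp only [mem_image, mem_range, mem_product, mem_singleton, mem_Ico, Prod.mk.injEq]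
    constructor
    · rintro ⟨s, hs, rfl, rfl⟩; omega
    · rintro ⟨h, rfl⟩; exact ⟨x - i, by omega, by omega, rfl⟩
  simp only [IsVTile, this]

lemma isSqTile_iff : IsSqTile k t ↔ ∃ q, t = square k q := by
  have (i j : ℕ) : ((range k ×ˢ range k).image fun p => (i + p.1, j + p.2)) = square k (i, j) := by
    ext ⟨x, y⟩
    simp only [square, mem_image, mem_product, mem_range, mem_Ico, Prod.exists, Prod.mk.injEq]
    constructor
    · rintro ⟨a, b, ⟨ha, hb⟩, rfl, rfl⟩; omega
    · rintro ⟨hx, hy⟩; exact ⟨x - i, y - j, ⟨by omega, by omega⟩, by omega, by omega⟩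
  simp only [IsSqTile, this, Prod.exists]

lemma not_isSqTile (hk : 2 ≤ k) (ht : IsHTile k t ∨ IsVTile k t) : ¬ IsSqTile k t := by
  rw [isSqTile_iff]
  rintro ⟨q, rfl⟩
  have hcard : (square k q).card = k := by
    rcases ht with ht | ht
    · obtain ⟨i, j, h⟩ := isHTile_iff.1 ht; simp [h]
    · obtain ⟨i, j, h⟩ := isVTile_iff.1 ht; simp [h]
  rw [card_square] at hcard
  nlinarith

lemma isBrick1_iff :
    IsBrick1 k b ↔ ∃ i j c, b = cylinder ({i} ×ˢ Ico j (j + k)) (Ico c (c + k)) := by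
  have (i j c : ℕ) : ((range k ×ˢ range k).image fun p => (i, j + p.1, c + p.2)) =
      cylinder ({i} ×ˢ Ico j (j + k)) (Ico c (c + k)) := by
    ext ⟨x, y, z⟩
    simp only [mem_image, mem_product, mem_range, mem_cylinder, mem_singleton, mem_Ico,
      Prod.exists, Prod.mk.injEq]
    constructor
    · rintro ⟨a, b, ⟨ha, hb⟩, rfl, rfl, rfl⟩; omega
    · rintro ⟨⟨rfl, hy⟩, hz⟩; exact ⟨y - j, z - c, ⟨by omega, by omega⟩, rfl, by omega, by omega⟩
  simp only [IsBrick1, this]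

lemma isBrick2_iff :
    IsBrick2 k b ↔ ∃ i j c, b = cylinder (Ico i (i + k) ×ˢ {j}) (Ico c (c + k)) := by
  have (i j c : ℕ) : ((range k ×ˢ range k).image fun p => (i + p.1, j, c + p.2)) =
      cylinder (Ico i (i + k) ×ˢ {j}) (Ico c (c + k)) := by
    ext ⟨x, y, z⟩
    simp only [mem_image, mem_product, mem_range, mem_cylinder, mem_singleton, mem_Ico,
      Prod.exists, Prod.mk.injEq]
    constructor
    · rintro ⟨a, b, ⟨ha, hb⟩, rfl, rfl, rfl⟩; omega
    · rintro ⟨⟨hx, rfl⟩, hz⟩; exact ⟨x - i, z - c, ⟨by omega, by omega⟩, by omega, rfl, by omega⟩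
  simp only [IsBrick2, this]

lemma isBrick3_iff : IsBrick3 k b ↔ ∃ q c, b = cylinder (square k q) {c} := by
  have (i j c : ℕ) : ((range k ×ˢ range k).image fun p => (i + p.1, j + p.2, c)) =
      cylinder (square k (i, j)) {c} := by
    ext ⟨x, y, z⟩
    simp only [square, mem_image, mem_product, mem_range, mem_cylinder, mem_singleton, mem_Ico,
      Prod.exists, Prod.mk.injEq]
    constructor
    · rintro ⟨a, b, ⟨ha, hb⟩, rfl, rfl, rfl⟩; omega
    · rintro ⟨⟨hx, hy⟩, rfl⟩; exact ⟨x - i, y - j, ⟨by omega, by omega⟩, by omega, by omega, rfl⟩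
  simp only [IsBrick3, this, Prod.exists]

lemma mem_of_iUnion_square_subset (hk : 0 < k) {C D : Set (ℕ × ℕ)}
    (hC : C.PairwiseDisjoint (square k))
    (hCD : ⋃ q ∈ C, (square k q : Set (ℕ × ℕ)) ⊆ ⋃ q ∈ D, (square k q : Set (ℕ × ℕ)))
    {q : ℕ × ℕ} (hq : q ∈ C) (ih : ∀ q' ∈ D, q'.1 + q'.2 < q.1 + q.2 → q' ∈ C) : q ∈ D := by
  obtain ⟨q', hq'D, hqq'⟩ : ∃ q' ∈ D, q ∈ square k q' := by
    simpa using hCD (Set.mem_biUnion hq (mem_square_self hk q))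
  by_contra hqD
  have hne : q' ≠ q := fun h => hqD (h ▸ hq'D)
  have hlt : q'.1 + q'.2 < q.1 + q.2 := by
    have := le_of_mem_square hqq'
    have := Prod.ext_iff.not.1 hne
    omega
  exact hne (hC.elim_finset (ih q' hq'D hlt) hq q hqq' (mem_square_self hk q))

theorem eq_of_iUnion_square_eq (hk : 0 < k) {C D : Set (ℕ × ℕ)}
    (hC : C.PairwiseDisjoint (square k)) (hD : D.PairwiseDisjoint (square k))
    (hCD : ⋃ q ∈ C, (square k q : Set (ℕ × ℕ)) = ⋃ q ∈ D, (square k q : Set (ℕ × ℕ))) :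
    C = D := by
  ext q
  induction h : q.1 + q.2 using Nat.strong_induction_on generalizing q with
  | _ s ih =>
    subst h
    exact ⟨fun hq => mem_of_iUnion_square_subset hk hC hCD.subset hq
        fun q' hq' hlt => (ih _ hlt q' rfl).2 hq',
      fun hq => mem_of_iUnion_square_subset hk hD hCD.symm.subset hq
        fun q' hq' hlt => (ih _ hlt q' rfl).1 hq'⟩

open Classical in
/-- A `k × k` tile is lifted to a stack of `k` flat bricks, every other tile to a single upright
brick. -/
noncomputable def levels (k : ℕ) (t : Finset (ℕ × ℕ)) : Finset (Finset ℕ) :=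
  if IsSqTile k t then (range k).image singleton else {range k}

lemma mem_levels :
    Z ∈ levels k t ↔ (IsSqTile k t ∧ ∃ c < k, Z = {c}) ∨ (¬ IsSqTile k t ∧ Z = range k) := by
  unfold levels
  split_ifs with h <;> simp [h, eq_comm]

lemma eq_range_of_mem_levels (ht : ¬ IsSqTile k t) (hZ : Z ∈ levels k t) : Z = range k := by
  rcases mem_levels.1 hZ with ⟨h, -⟩ | ⟨-, h⟩
  exacts [absurd h ht, h]

lemma exists_eq_singleton_of_mem_levels (ht : IsSqTile k t) (hZ : Z ∈ levels k t) :
    ∃ c < k, Z = {c} := by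
  rcases mem_levels.1 hZ with ⟨-, h⟩ | ⟨h, -⟩
  exacts [h, absurd ht h]

lemma nonempty_of_mem_levels (hk : 0 < k) (hZ : Z ∈ levels k t) : Z.Nonempty := by
  rcases mem_levels.1 hZ with ⟨_, c, _, rfl⟩ | ⟨_, rfl⟩
  · exact singleton_nonempty c
  · exact nonempty_range_iff.2 hk.ne'

lemma subset_range_of_mem_levels (hZ : Z ∈ levels k t) : Z ⊆ range k := by
  rcases mem_levels.1 hZ with ⟨_, c, hc, rfl⟩ | ⟨_, rfl⟩
  · exact singleton_subset_iff.2 (mem_range.2 hc)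
  · exact subset_rfl

lemma exists_mem_levels {z : ℕ} (hz : z < k) : ∃ Z ∈ levels k t, z ∈ Z := by
  by_cases h : IsSqTile k t
  · exact ⟨{z}, mem_levels.2 (Or.inl ⟨h, z, hz, rfl⟩), mem_singleton_self z⟩
  · exact ⟨range k, mem_levels.2 (Or.inr ⟨h, rfl⟩), mem_range.2 hz⟩

lemma disjoint_of_mem_levels (hZ : Z ∈ levels k t) (hZ' : Z' ∈ levels k t) (hne : Z ≠ Z') :
    Disjoint Z Z' := by
  by_cases ht : IsSqTile k t
  · obtain ⟨c, -, rfl⟩ := exists_eq_singleton_of_mem_levels ht hZ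
    obtain ⟨c', -, rfl⟩ := exists_eq_singleton_of_mem_levels ht hZ'
    exact disjoint_singleton.2 fun h => hne (h ▸ rfl)
  · exact absurd ((eq_range_of_mem_levels ht hZ).trans (eq_range_of_mem_levels ht hZ').symm) hne

noncomputable def liftTile (k : ℕ) (t : Finset (ℕ × ℕ)) : Finset (Finset (ℕ × ℕ × ℕ)) :=
  (levels k t).image (cylinder t)

noncomputable def lift (k : ℕ) (T' : Finset (Finset (ℕ × ℕ))) : Finset (Finset (ℕ × ℕ × ℕ)) :=
  T'.biUnion (liftTile k)

lemma mem_liftTile : b ∈ liftTile k t ↔ ∃ Z ∈ levels k t, cylinder t Z = b :=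
  mem_image

lemma cylinder_range_mem_liftTile (ht : ¬ IsSqTile k t) : cylinder t (range k) ∈ liftTile k t :=
  mem_liftTile.2 ⟨range k, mem_levels.2 (Or.inr ⟨ht, rfl⟩), rfl⟩

lemma cylinder_singleton_mem_liftTile (ht : IsSqTile k t) (hc : c < k) :
    cylinder t {c} ∈ liftTile k t :=
  mem_liftTile.2 ⟨{c}, mem_levels.2 (Or.inl ⟨ht, c, hc, rfl⟩), rfl⟩

lemma footprint_of_mem_liftTile (hk : 0 < k) (hb : b ∈ liftTile k t) : footprint b = t := by
  obtain ⟨Z, hZ, rfl⟩ := mem_liftTile.1 hb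
  exact footprint_cylinder t (nonempty_of_mem_levels hk hZ)

lemma biUnion_liftTile (k : ℕ) (t : Finset (ℕ × ℕ)) :
    (liftTile k t).biUnion id = cylinder t (range k) := by
  ext p
  simp only [mem_biUnion, mem_liftTile, id, mem_cylinder, mem_range]
  constructor
  · rintro ⟨_, ⟨Z, hZ, rfl⟩, hp⟩
    exact ⟨(mem_cylinder.1 hp).1, mem_range.1 (subset_range_of_mem_levels hZ (mem_cylinder.1 hp).2)⟩
  · rintro ⟨hp, hz⟩
    obtain ⟨Z, hZ, hzZ⟩ := exists_mem_levels (t := t) hz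
    exact ⟨_, ⟨Z, hZ, rfl⟩, mem_cylinder.2 ⟨hp, hzZ⟩⟩

lemma isBrick_of_mem_liftTile (hk : 2 ≤ k) (ht : IsHTile k t ∨ IsVTile k t ∨ IsSqTile k t)
    (hb : b ∈ liftTile k t) : IsBrick1 k b ∨ IsBrick2 k b ∨ IsBrick3 k b := by
  obtain ⟨Z, hZ, rfl⟩ := mem_liftTile.1 hb
  rcases ht with ht | ht | ht
  · rw [eq_range_of_mem_levels (not_isSqTile hk (Or.inl ht)) hZ, range_eq_Ico]
    obtain ⟨i, j, rfl⟩ := isHTile_iff.1 ht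
    exact Or.inl (isBrick1_iff.2 ⟨i, j, 0, by rw [zero_add]⟩)
  · rw [eq_range_of_mem_levels (not_isSqTile hk (Or.inr ht)) hZ, range_eq_Ico]
    obtain ⟨i, j, rfl⟩ := isVTile_iff.1 ht
    exact Or.inr (Or.inl (isBrick2_iff.2 ⟨i, j, 0, by rw [zero_add]⟩))
  · obtain ⟨c, -, rfl⟩ := exists_eq_singleton_of_mem_levels ht hZ
    obtain ⟨q, rfl⟩ := isSqTile_iff.1 ht
    exact Or.inr (Or.inr (isBrick3_iff.2 ⟨q, c, rfl⟩))

lemma pairwiseDisjoint_lift {T' : Finset (Finset (ℕ × ℕ))}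
    (hT' : (T' : Set (Finset (ℕ × ℕ))).PairwiseDisjoint id) :
    (lift k T' : Set (Finset (ℕ × ℕ × ℕ))).PairwiseDisjoint id := by
  intro b₁ hb₁ b₂ hb₂ hne
  simp only [lift, coe_biUnion, Set.mem_iUnion, mem_coe, mem_liftTile] at hb₁ hb₂
  obtain ⟨t₁, ht₁, Z₁, hZ₁, rfl⟩ := hb₁
  obtain ⟨t₂, ht₂, Z₂, hZ₂, rfl⟩ := hb₂
  rw [Function.onFun, id, id, disjoint_cylinder_iff]
  by_cases ht : t₁ = t₂
  · subst ht
    exact Or.inr (disjoint_of_mem_levels hZ₁ hZ₂ fun h => hne (h ▸ rfl))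
  · exact Or.inl (hT' ht₁ ht₂ ht)

lemma biUnion_lift (k : ℕ) (T' : Finset (Finset (ℕ × ℕ))) :
    (lift k T').biUnion id = cylinder (T'.biUnion id) (range k) := by
  ext p
  simp only [lift, biUnion_biUnion, biUnion_liftTile, mem_biUnion, mem_cylinder, id]
  tauto

lemma projTiling_lift (hk : 0 < k) (T' : Finset (Finset (ℕ × ℕ))) :
    projTiling (lift k T') = T' := by
  ext t
  simp only [mem_projTiling, lift, mem_biUnion]
  constructor
  · rintro ⟨b, ⟨t', ht', hb⟩, rfl⟩
    exact (footprint_of_mem_liftTile hk hb).symm ▸ ht'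
  · intro ht
    obtain ⟨Z, hZ, -⟩ := exists_mem_levels (t := t) hk
    exact ⟨cylinder t Z, ⟨t, ht, mem_liftTile.2 ⟨Z, hZ, rfl⟩⟩,
      footprint_cylinder t (nonempty_of_mem_levels hk hZ)⟩

def cornersAt (k : ℕ) (T : Finset (Finset (ℕ × ℕ × ℕ))) (c : ℕ) : Set (ℕ × ℕ) :=
  {q | cylinder (square k q) {c} ∈ T}

end CuboidTiling

open CuboidTiling

lemma IsTiling'.isCuboidTiling_lift {m n k : ℕ} (hk : 2 ≤ k) {T' : Finset (Finset (ℕ × ℕ))}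
    (hT' : IsTiling' m n k T') : IsCuboidTiling m n k (lift k T') := by
  refine ⟨fun b hb => ?_, pairwiseDisjoint_lift hT'.2.1, ?_⟩
  · obtain ⟨t, ht, hbt⟩ := mem_biUnion.1 hb
    exact isBrick_of_mem_liftTile hk (hT'.1 t ht) hbt
  · rw [biUnion_lift, hT'.2.2, grid3_eq_cylinder]

namespace IsCuboidTiling

variable {m n k c : ℕ} {T : Finset (Finset (ℕ × ℕ × ℕ))} {b : Finset (ℕ × ℕ × ℕ)}

lemma subset_cylinder (hT : IsCuboidTiling m n k T) (hb : b ∈ T) :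
    b ⊆ cylinder (grid m n) (range k) :=
  grid3_eq_cylinder m n k ▸ hT.2.2 ▸ subset_biUnion_of_mem id hb

lemma lt_of_mem (hT : IsCuboidTiling m n k T) (hb : b ∈ T) {p : ℕ × ℕ × ℕ} (hp : p ∈ b) :
    p.2.2 < k :=
  mem_range.1 (mem_cylinder.1 (hT.subset_cylinder hb hp)).2

lemma exists_mem_of_mem_cylinder (hT : IsCuboidTiling m n k T) {p : ℕ × ℕ × ℕ}
    (hp : p ∈ cylinder (grid m n) (range k)) : ∃ b ∈ T, p ∈ b := by
  rw [← grid3_eq_cylinder, ← hT.2.2] at hp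
  simpa using hp

lemma eq_of_mem_of_mem (hT : IsCuboidTiling m n k T) {b₁ b₂ : Finset (ℕ × ℕ × ℕ)}
    (hb₁ : b₁ ∈ T) (hb₂ : b₂ ∈ T) {p : ℕ × ℕ × ℕ} (h₁ : p ∈ b₁) (h₂ : p ∈ b₂) : b₁ = b₂ :=
  hT.2.1.elim_finset hb₁ hb₂ p h₁ h₂

lemma eq_zero_of_cylinder_Ico_mem (hk : 0 < k) (hT : IsCuboidTiling m n k T)
    {t : Finset (ℕ × ℕ)} (ht : t.Nonempty) (hb : cylinder t (Ico c (c + k)) ∈ T) : c = 0 := by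
  obtain ⟨q, hq⟩ := ht
  have := hT.lt_of_mem hb (p := (q.1, q.2, c + k - 1)) (mem_cylinder.2 ⟨hq, by simp; omega⟩)
  simp only at this
  omega

lemma exists_mem_liftTile (hk : 2 ≤ k) (hT : IsCuboidTiling m n k T) (hb : b ∈ T) :
    ∃ t, (IsHTile k t ∨ IsVTile k t ∨ IsSqTile k t) ∧ b ∈ liftTile k t := by
  have hk₀ : 0 < k := by omega
  rcases hT.1 b hb with h | h | h
  · obtain ⟨i, j, c, rfl⟩ := isBrick1_iff.1 h
    have ht : IsHTile k ({i} ×ˢ Ico j (j + k)) := isHTile_iff.2 ⟨i, j, rfl⟩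
    obtain rfl := hT.eq_zero_of_cylinder_Ico_mem hk₀ (by simp [hk₀]) hb
    rw [zero_add, ← range_eq_Ico]
    exact ⟨_, Or.inl ht, cylinder_range_mem_liftTile (not_isSqTile hk (Or.inl ht))⟩
  · obtain ⟨i, j, c, rfl⟩ := isBrick2_iff.1 h
    have ht : IsVTile k (Ico i (i + k) ×ˢ {j}) := isVTile_iff.2 ⟨i, j, rfl⟩
    obtain rfl := hT.eq_zero_of_cylinder_Ico_mem hk₀ (by simp [hk₀]) hb
    rw [zero_add, ← range_eq_Ico]
    exact ⟨_, Or.inr (Or.inl ht), cylinder_range_mem_liftTile (not_isSqTile hk (Or.inr ht))⟩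
  · obtain ⟨q, c, rfl⟩ := isBrick3_iff.1 h
    have ht : IsSqTile k (square k q) := isSqTile_iff.2 ⟨q, rfl⟩
    have hc : c < k := hT.lt_of_mem hb (p := (q.1, q.2, c))
      (mem_cylinder.2 ⟨mem_square_self hk₀ q, mem_singleton_self c⟩)
    exact ⟨_, Or.inr (Or.inr ht), cylinder_singleton_mem_liftTile ht hc⟩

lemma mem_liftTile_footprint (hk : 2 ≤ k) (hT : IsCuboidTiling m n k T) (hb : b ∈ T) :
    b ∈ liftTile k (footprint b) := by
  obtain ⟨t, -, hbt⟩ := hT.exists_mem_liftTile hk hb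
  rwa [footprint_of_mem_liftTile (by omega) hbt]

lemma isTile_footprint (hk : 2 ≤ k) (hT : IsCuboidTiling m n k T) (hb : b ∈ T) :
    IsHTile k (footprint b) ∨ IsVTile k (footprint b) ∨ IsSqTile k (footprint b) := by
  obtain ⟨t, ht, hbt⟩ := hT.exists_mem_liftTile hk hb
  rwa [footprint_of_mem_liftTile (by omega) hbt]

lemma pairwiseDisjoint_cornersAt (hk : 0 < k) (hT : IsCuboidTiling m n k T) (c : ℕ) :
    (cornersAt k T c).PairwiseDisjoint (square k) := by
  intro q hq q' hq' hne
  rw [Function.onFun, Finset.disjoint_left]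
  intro p hp hp'
  have hb := hT.eq_of_mem_of_mem hq hq' (p := (p.1, p.2, c)) (by simp [hp]) (by simp [hp'])
  apply hne (square_injective hk _)
  simpa [footprint_cylinder] using congrArg footprint hb

lemma iUnion_cornersAt_subset (hk : 2 ≤ k) (hT : IsCuboidTiling m n k T) {c' : ℕ}
    (hc' : c' < k) : ⋃ q ∈ cornersAt k T c, (square k q : Set (ℕ × ℕ)) ⊆
      ⋃ q ∈ cornersAt k T c', (square k q : Set (ℕ × ℕ)) := by
  simp only [Set.iUnion_subset_iff]
  intro q hq p hp
  rw [Finset.mem_coe] at hp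
  have hpq : (p.1, p.2, c) ∈ cylinder (square k q) {c} := by simp [hp]
  obtain ⟨hpgrid, -⟩ := mem_cylinder.1 (hT.subset_cylinder hq hpq)
  obtain ⟨b, hb, hpb⟩ :=
    hT.exists_mem_of_mem_cylinder (p := (p.1, p.2, c')) (mem_cylinder.2 ⟨hpgrid, mem_range.2 hc'⟩)
  by_cases hcb : (p.1, p.2, c) ∈ b
  · obtain rfl := hT.eq_of_mem_of_mem hq hb hpq hcb
    obtain rfl : c' = c := by simpa using (mem_cylinder.1 hpb).2
    exact Set.mem_biUnion hq hp
  · -- the brick through `(p, c')` misses `(p, c)`, so it is not upright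
    obtain ⟨t, -, hbt⟩ := hT.exists_mem_liftTile hk hb
    obtain ⟨Z, hZ, rfl⟩ := mem_liftTile.1 hbt
    have hpt : p ∈ t := by simpa using (mem_cylinder.1 hpb).1
    rcases mem_levels.1 hZ with ⟨hsq, c'', -, rfl⟩ | ⟨-, rfl⟩
    · obtain ⟨q', rfl⟩ := isSqTile_iff.1 hsq
      obtain rfl : c' = c'' := by simpa using (mem_cylinder.1 hpb).2
      exact Set.mem_biUnion (show q' ∈ cornersAt k T c' from hb) hpt
    · exact absurd (mem_cylinder.2 ⟨by simpa using hpt, mem_range.2 (hT.lt_of_mem hq hpq)⟩) hcb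

lemma cornersAt_eq (hk : 2 ≤ k) (hT : IsCuboidTiling m n k T) {c' : ℕ} (hc : c < k)
    (hc' : c' < k) : cornersAt k T c = cornersAt k T c' :=
  eq_of_iUnion_square_eq (by omega) (hT.pairwiseDisjoint_cornersAt (by omega) c)
    (hT.pairwiseDisjoint_cornersAt (by omega) c')
    ((hT.iUnion_cornersAt_subset hk hc').antisymm (hT.iUnion_cornersAt_subset hk hc))

lemma liftTile_footprint_subset (hk : 2 ≤ k) (hT : IsCuboidTiling m n k T) (hb : b ∈ T) :
    liftTile k (footprint b) ⊆ T := by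
  intro b' hb'
  obtain ⟨Z, hZ, hbZ⟩ := mem_liftTile.1 (hT.mem_liftTile_footprint hk hb)
  obtain ⟨Z', hZ', rfl⟩ := mem_liftTile.1 hb'
  by_cases hsq : IsSqTile k (footprint b)
  · obtain ⟨c, hc, rfl⟩ := exists_eq_singleton_of_mem_levels hsq hZ
    obtain ⟨c', hc', rfl⟩ := exists_eq_singleton_of_mem_levels hsq hZ'
    obtain ⟨q, hq⟩ := isSqTile_iff.1 hsq
    rw [hq] at hbZ ⊢
    have : q ∈ cornersAt k T c := show cylinder (square k q) {c} ∈ T from hbZ ▸ hb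
    exact (hT.cornersAt_eq hk hc hc' ▸ this : q ∈ cornersAt k T c')
  · rw [eq_range_of_mem_levels hsq hZ', ← eq_range_of_mem_levels hsq hZ, hbZ]
    exact hb

lemma lift_projTiling (hk : 2 ≤ k) (hT : IsCuboidTiling m n k T) : lift k (projTiling T) = T := by
  ext b
  simp only [lift, mem_biUnion, mem_projTiling]
  constructor
  · rintro ⟨_, ⟨b₀, hb₀, rfl⟩, hb⟩
    exact hT.liftTile_footprint_subset hk hb₀ hb
  · exact fun hb => ⟨_, ⟨b, hb, rfl⟩, hT.mem_liftTile_footprint hk hb⟩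

lemma footprint_eq_of_mem (hk : 2 ≤ k) (hT : IsCuboidTiling m n k T)
    {b₁ b₂ : Finset (ℕ × ℕ × ℕ)} (hb₁ : b₁ ∈ T) (hb₂ : b₂ ∈ T) {p : ℕ × ℕ}
    (h₁ : p ∈ footprint b₁) (h₂ : p ∈ footprint b₂) : footprint b₁ = footprint b₂ := by
  obtain ⟨z, hz⟩ := mem_footprint.1 h₂
  have hpz : (p.1, p.2, z) ∈ (liftTile k (footprint b₁)).biUnion id := by
    rw [biUnion_liftTile]
    exact mem_cylinder.2 ⟨h₁, mem_range.2 (hT.lt_of_mem hb₂ hz)⟩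
  obtain ⟨b, hb, hpb⟩ := mem_biUnion.1 hpz
  rw [← footprint_of_mem_liftTile (by omega) hb,
    hT.eq_of_mem_of_mem (hT.liftTile_footprint_subset hk hb₁ hb) hb₂ hpb hz]

lemma isTiling'_projTiling (hk : 2 ≤ k) (hT : IsCuboidTiling m n k T) :
    IsTiling' m n k (projTiling T) := by
  refine ⟨?_, ?_, ?_⟩
  · intro t ht
    obtain ⟨b, hb, rfl⟩ := mem_projTiling.1 ht
    exact hT.isTile_footprint hk hb
  · intro t₁ ht₁ t₂ ht₂ hne
    obtain ⟨b₁, hb₁, rfl⟩ := mem_projTiling.1 ht₁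
    obtain ⟨b₂, hb₂, rfl⟩ := mem_projTiling.1 ht₂
    exact Finset.disjoint_left.2 fun p h₁ h₂ => hne (hT.footprint_eq_of_mem hk hb₁ hb₂ h₁ h₂)
  · rw [← footprint_biUnion, hT.2.2, grid3_eq_cylinder,
      footprint_cylinder _ (nonempty_range_iff.2 (by omega))]

end IsCuboidTiling

theorem stmt_18_general (m n k : ℕ) (hk : 2 ≤ k) :
    ∃ e : {T : Finset (Finset (ℕ × ℕ × ℕ)) // IsCuboidTiling m n k T} ≃
        {T' : Finset (Finset (ℕ × ℕ)) // IsTiling' m n k T'},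
      ∀ T, ((e T : {T' : Finset (Finset (ℕ × ℕ)) // IsTiling' m n k T'}) :
          Finset (Finset (ℕ × ℕ))) = projTiling (T : Finset (Finset (ℕ × ℕ × ℕ))) := by
  refine ⟨{ toFun := fun T => ⟨projTiling T, T.2.isTiling'_projTiling hk⟩
            invFun := fun T' => ⟨lift k T', T'.2.isCuboidTiling_lift hk⟩
            left_inv := fun T => Subtype.ext (T.2.lift_projTiling hk)
            right_inv := fun T' => Subtype.ext (projTiling_lift (by omega) T') }, fun _ => rfl⟩

theorem stmt_18 (m n k : ℕ) (hk : 2 ≤ k) (hm : 0 < m) (hn : 0 < n) :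
    ∃ e : {T : Finset (Finset (ℕ × ℕ × ℕ)) // IsCuboidTiling m n k T} ≃
        {T' : Finset (Finset (ℕ × ℕ)) // IsTiling' m n k T'},
      ∀ T, ((e T : {T' : Finset (Finset (ℕ × ℕ)) // IsTiling' m n k T'}) :
          Finset (Finset (ℕ × ℕ))) = projTiling (T : Finset (Finset (ℕ × ℕ × ℕ))) :=
  stmt_18_general m n k hk
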